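/- arXiv:2504.07573 — 8 statements merged into one kernel-verified Lean document; each statement's English description precedes it below -/
import Mathlib

section
/- Let k ≥ 1 and d ≤ k. Let p ∈ ℂ[x] be a polynomial of degree exactly k, let n = ⌈(k+1)/d⌉, and let a₁, …, aₙ ∈ ℂ be distinct. Then the polynomials ∂ₓⁱ(p(x + aₗ)) for 1 ≤ ℓ ≤ n and 0 ≤ i < d span the space ℂ[x]_{≤k} of polynomials of degree at most k. -/
/-!
A functional `φ` vanishing on all the generators yields the polynomial `F(t) = φ(p(x + t))` of
degree at most `k`, whose derivatives `F⁽ⁱ⁾(aₗ) = φ(∂ⁱ p(x + aₗ))` vanish for `i < d`. Having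
`n d > k` roots counted with multiplicity, `F = 0`, so `φ` kills every derivative `∂ⁱ p`. These
have degrees `k, k - 1, …, 0` and hence span `ℂ[x]_{≤k}`, on which `φ` therefore vanishes.
-/

open Polynomial

namespace Polynomial

section Taylor

variable {R : Type*} [CommSemiring R]

theorem derivative_taylor (t : R) (r : R[X]) :
    derivative (taylor t r) = taylor t (derivative r) := by
  rw [taylor_apply, taylor_apply, derivative_comp, derivative_X_add_C, one_mul]

theorem iterate_derivative_taylor (t : R) (r : R[X]) (i : ℕ) :
    derivative^[i] (taylor t r) = taylor t (derivative^[i] r) := by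
  induction i with
  | zero => rfl
  | succ i ih =>
    rw [Function.iterate_succ_apply', ih, derivative_taylor, Function.iterate_succ_apply']

theorem derivative_hasseDeriv (n : ℕ) (r : R[X]) :
    derivative (hasseDeriv n r) = hasseDeriv n (derivative r) := by
  have h1 := LinearMap.congr_fun (hasseDeriv_comp (R := R) 1 n) r
  have h2 := LinearMap.congr_fun (hasseDeriv_comp (R := R) n 1) r
  simp only [LinearMap.comp_apply, hasseDeriv_one, LinearMap.smul_apply] at h1 h2
  rw [h1, h2, Nat.choose_one_right, Nat.choose_succ_self_right, add_comm]

/-- The polynomial `t ↦ φ (r (X + t))`, provided `r.natDegree ≤ k` (see `eval_taylorPairing`). -/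
noncomputable def taylorPairing (φ : R[X] →ₗ[R] R) (k : ℕ) (r : R[X]) : R[X] :=
  ∑ n ∈ Finset.range (k + 1), φ (X ^ n) • hasseDeriv n r

variable (φ : R[X] →ₗ[R] R) {k : ℕ}

theorem eval_taylorPairing {r : R[X]} (hr : r.natDegree ≤ k) (t : R) :
    (taylorPairing φ k r).eval t = φ (taylor t r) := by
  conv_rhs => rw [(taylor t r).as_sum_range' (k + 1) (by rw [natDegree_taylor]; omega)]
  simp only [taylorPairing, eval_finsetSum, eval_smul, map_sum, taylor_coeff, smul_eq_mul,
    ← smul_X_eq_monomial, map_smul, mul_comm]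

theorem natDegree_taylorPairing_le {r : R[X]} (hr : r.natDegree ≤ k) :
    (taylorPairing φ k r).natDegree ≤ k :=
  natDegree_sum_le_of_forall_le _ _ fun n _ =>
    (natDegree_smul_le _ _).trans ((natDegree_hasseDeriv_le r n).trans (by omega))

theorem iterate_derivative_taylorPairing (r : R[X]) (i : ℕ) :
    derivative^[i] (taylorPairing φ k r) = taylorPairing φ k (derivative^[i] r) := by
  induction i with
  | zero => rfl
  | succ i ih =>
    rw [Function.iterate_succ_apply', ih, Function.iterate_succ_apply', taylorPairing,
      taylorPairing, map_sum]
    simp only [derivative_smul, derivative_hasseDeriv]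

theorem eval_iterate_derivative_taylorPairing {r : R[X]} (hr : r.natDegree ≤ k) (i : ℕ)
    (t : R) :
    (derivative^[i] (taylorPairing φ k r)).eval t = φ (taylor t (derivative^[i] r)) := by
  rw [iterate_derivative_taylorPairing,
    eval_taylorPairing φ ((natDegree_iterate_derivative r i).trans (by omega))]

end Taylor

section Field

variable {K : Type*} [Field K]

theorem degreeLE_le_span_singleton_sup_degreeLT {p : K[X]} (hp : p ≠ 0) :
    degreeLE K p.natDegree ≤ K ∙ p ⊔ degreeLT K p.natDegree := by
  intro q hq
  set c := q.coeff p.natDegree / p.leadingCoeff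
  refine Submodule.mem_sup.2 ⟨c • p, Submodule.mem_span_singleton.2 ⟨c, rfl⟩, q - c • p, ?_,
    add_sub_cancel _ _⟩
  rw [mem_degreeLT, degree_lt_iff_coeff_zero]
  intro m hm
  rw [coeff_sub, coeff_smul, smul_eq_mul]
  rcases hm.eq_or_lt with rfl | hlt
  · rw [coeff_natDegree, div_mul_cancel₀ _ (leadingCoeff_ne_zero.2 hp), sub_self]
  · rw [mem_degreeLE] at hq
    rw [coeff_eq_zero_of_degree_lt (hq.trans_lt (by exact_mod_cast hlt)),
      coeff_eq_zero_of_natDegree_lt hlt, mul_zero, sub_zero]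

variable [CharZero K]

theorem eq_zero_of_forall_iterate_derivative_isRoot {ι : Type*} [Fintype ι] {a : ι → K}
    (ha : Function.Injective a) {d : ℕ} {f : K[X]} (hdeg : f.natDegree < Fintype.card ι * d)
    (hroot : ∀ ℓ, ∀ m < d, (derivative^[m] f).IsRoot (a ℓ)) : f = 0 := by
  by_contra hf
  have hdvd (ℓ : ι) : (X - C (a ℓ)) ^ d ∣ f := by
    rw [← le_rootMultiplicity_iff hf]
    rcases d with _ | d
    · exact Nat.zero_le _
    · exact lt_rootMultiplicity_of_isRoot_iterate_derivative hf fun m hm => hroot ℓ m (by omega)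
  have hprod : ∏ ℓ, (X - C (a ℓ)) ^ d ∣ f :=
    Fintype.prod_dvd_of_coprime ((pairwise_coprime_X_sub_C ha).mono fun _ _ h => h.pow) hdvd
  have := natDegree_le_of_dvd hprod hf
  simp only [natDegree_prod _ _ fun ℓ _ => pow_ne_zero d (X_sub_C_ne_zero (a ℓ)), natDegree_pow,
    natDegree_X_sub_C, mul_one, Finset.sum_const, Finset.card_univ, smul_eq_mul] at this
  omega

theorem degreeLE_le_span_iterate_derivative {p : K[X]} (hp : p ≠ 0) :
    degreeLE K p.natDegree ≤ Submodule.span K (Set.range fun i => derivative^[i] p) := by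
  refine (degreeLE_le_span_singleton_sup_degreeLT hp).trans (sup_le ?_ ?_)
  · exact Submodule.span_mono (Set.singleton_subset_iff.2 ⟨0, rfl⟩)
  have hshift : Submodule.span K (Set.range fun i => derivative^[i] (derivative p)) ≤
      Submodule.span K (Set.range fun i => derivative^[i] p) := by
    refine Submodule.span_mono ?_
    rintro _ ⟨i, rfl⟩
    exact ⟨i + 1, Function.iterate_succ_apply _ _ _⟩
  refine le_trans ?_ hshift
  rcases h : p.natDegree with _ | n
  · intro q hq
    rw [mem_degreeLT, Nat.cast_zero, Nat.WithBot.lt_zero_iff, degree_eq_bot] at hq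
    exact hq ▸ zero_mem _
  · have hp' : derivative p ≠ 0 := derivative_ne_zero.2 (by omega)
    have hn : (derivative p).natDegree = n := by rw [natDegree_derivative, h]; rfl
    rw [degreeLT_succ_eq_degreeLE, ← hn]
    exact degreeLE_le_span_iterate_derivative hp'
termination_by p.natDegree
decreasing_by rw [natDegree_derivative]; omega

theorem span_iterate_derivative_taylor_eq_degreeLE {ι : Type*} [Fintype ι] {a : ι → K}
    (ha : Function.Injective a) {d : ℕ} {p : K[X]} (hp : p ≠ 0)
    (hdeg : p.natDegree < Fintype.card ι * d) :
    Submodule.span K {q | ∃ (ℓ : ι) (i : ℕ), i < d ∧ q = derivative^[i] (taylor (a ℓ) p)} =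
      degreeLE K p.natDegree := by
  refine le_antisymm (Submodule.span_le.2 ?_) ?_
  · rintro _ ⟨ℓ, i, -, rfl⟩
    refine mem_degreeLE.2 (degree_le_of_natDegree_le ?_)
    exact (natDegree_iterate_derivative _ i).trans (by rw [natDegree_taylor]; omega)
  rw [← Subspace.dualAnnihilator_le_dualAnnihilator_iff]
  intro φ hφ
  rw [Submodule.mem_dualAnnihilator] at hφ ⊢
  have hF : taylorPairing φ p.natDegree p = 0 := by
    refine eq_zero_of_forall_iterate_derivative_isRoot ha
      ((natDegree_taylorPairing_le φ le_rfl).trans_lt hdeg) fun ℓ m hm => ?_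
    rw [IsRoot, eval_iterate_derivative_taylorPairing φ le_rfl, ← iterate_derivative_taylor]
    exact hφ _ (Submodule.subset_span ⟨ℓ, m, hm, rfl⟩)
  intro q hq
  refine (Submodule.span_le (p := LinearMap.ker φ)).2 ?_
    (degreeLE_le_span_iterate_derivative hp hq)
  rintro _ ⟨i, rfl⟩
  simpa [hF, taylor_zero] using
    (eval_iterate_derivative_taylorPairing φ (le_refl p.natDegree) i 0).symm

end Field

end Polynomial

theorem stmt_0_general (k d : ℕ) (hk : 1 ≤ k) (hd1 : 1 ≤ d)
    (p : Polynomial ℂ) (hp : p.natDegree = k)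
    (a : Fin ((k + d) / d) → ℂ) (ha : Function.Injective a) :
    Submodule.span ℂ
      {q : Polynomial ℂ | ∃ (ℓ : Fin ((k + d) / d)) (i : ℕ), i < d ∧
        q = derivative^[i] (p.comp (X + C (a ℓ)))} =
      Polynomial.degreeLE ℂ k := by
  have hp0 : p ≠ 0 := by rintro rfl; rw [natDegree_zero] at hp; omega
  have hdeg : p.natDegree < Fintype.card (Fin ((k + d) / d)) * d := by
    have := Nat.lt_div_mul_add (a := k + d) hd1
    rw [Fintype.card_fin, hp]
    omega
  simpa only [taylor_apply, hp] using span_iterate_derivative_taylor_eq_degreeLE ha hp0 hdeg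

theorem stmt_0 (k d : ℕ) (hk : 1 ≤ k) (hd1 : 1 ≤ d) (hd : d ≤ k)
    (p : Polynomial ℂ) (hp : p.natDegree = k)
    (a : Fin ((k + d) / d) → ℂ) (ha : Function.Injective a) :
    Submodule.span ℂ
      {q : Polynomial ℂ | ∃ (ℓ : Fin ((k + d) / d)) (i : ℕ), i < d ∧
        q = derivative^[i] (p.comp (X + C (a ℓ)))} =
      Polynomial.degreeLE ℂ k :=
  stmt_0_general k d hk hd1 p hp a ha
end

section
/- Let k ≥ 1, let d ≤ k, and set n = ⌈(k+1)/d⌉. For any distinct a₁, …, aₙ ∈ ℂ, the polynomials (x + aₗ)^{k-i} for 1 ≤ ℓ ≤ n and 0 ≤ i < d span ℂ[x]_{≤k}. -/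
/-!
A linear functional `f` on `K[X]` that kills every `(X + a ℓ) ^ (k - i)` with `i < d` makes the
polynomial `t ↦ f ((X + t) ^ k)`, of degree at most `k`, vanish to order `d` at each of the `n`
points `a ℓ`, because its `i`-th derivative is `k (k - 1) ⋯ (k - i + 1) • f ((X + t) ^ (k - i))`.
Since `n * d > k`, this polynomial is zero; its coefficients are `(k choose j) * f (X ^ (k - j))`,
so `f` kills all of `degreeLE K k`.
-/

open Polynomial Finset

namespace Polynomial

theorem card_mul_le_natDegree_of_le_rootMultiplicity {R ι : Type*} [CommRing R] [IsDomain R]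
    [Fintype ι] {p : R[X]} {a : ι → R} (ha : Function.Injective a) {d : ℕ}
    (hmult : ∀ ℓ, d ≤ p.rootMultiplicity (a ℓ)) : Fintype.card ι * d ≤ p.natDegree := by
  classical
  have hle : d • (univ.val.map a) ≤ p.roots := by
    refine Multiset.le_iff_count.2 fun x => ?_
    rw [Multiset.count_nsmul, count_roots]
    by_cases hx : x ∈ univ.val.map a
    · obtain ⟨ℓ, -, rfl⟩ := Multiset.mem_map.1 hx
      rw [Multiset.count_eq_one_of_mem ((Multiset.nodup_map_iff_of_injective ha).2 univ.nodup) hx,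
        mul_one]
      exact hmult ℓ
    · simp [Multiset.count_eq_zero.2 hx]
  calc Fintype.card ι * d = Multiset.card (d • (univ.val.map a)) := by simp [mul_comm]
    _ ≤ Multiset.card p.roots := Multiset.card_le_card hle
    _ ≤ p.natDegree := card_roots' p

section DualPowAddC

variable {R : Type*} [CommRing R] (f : Module.Dual R R[X])

noncomputable def dualPowAddC (N : ℕ) : R[X] :=
  ∑ j ∈ range (N + 1), C (N.choose j * f (X ^ (N - j))) * X ^ j

theorem eval_dualPowAddC (N : ℕ) (t : R) : (dualPowAddC f N).eval t = f ((X + C t) ^ N) := by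
  rw [add_comm, add_pow, map_sum, dualPowAddC, eval_finsetSum]
  refine sum_congr rfl fun j _ => ?_
  have hterm :
      C t ^ j * X ^ (N - j) * (N.choose j : R[X]) = (t ^ j * N.choose j) • X ^ (N - j) := by
    rw [smul_eq_C_mul, C_mul, C_pow, ← C_eq_natCast]
    ring
  rw [hterm, map_smul, smul_eq_mul]
  simp only [eval_mul, eval_C, eval_pow, eval_X]
  ring

theorem coeff_dualPowAddC (N j : ℕ) :
    (dualPowAddC f N).coeff j = N.choose j * f (X ^ (N - j)) := by
  simp only [dualPowAddC, finsetSum_coeff, coeff_C_mul_X_pow, sum_ite_eq, mem_range]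
  split_ifs with h
  · rfl
  · rw [Nat.choose_eq_zero_of_lt (by omega), Nat.cast_zero, zero_mul]

theorem natDegree_dualPowAddC_le (N : ℕ) : (dualPowAddC f N).natDegree ≤ N :=
  natDegree_sum_le_of_forall_le _ _ fun _ hj =>
    (natDegree_C_mul_X_pow_le _ _).trans (mem_range_succ_iff.1 hj)

theorem derivative_dualPowAddC_succ (N : ℕ) :
    derivative (dualPowAddC f (N + 1)) = C ((N + 1 : ℕ) : R) * dualPowAddC f N := by
  ext j
  rw [coeff_derivative, coeff_C_mul, coeff_dualPowAddC, coeff_dualPowAddC,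
    show N + 1 - (j + 1) = N - j by omega]
  have h := congrArg (Nat.cast : ℕ → R) (Nat.add_one_mul_choose_eq N j)
  push_cast at h ⊢
  linear_combination f (X ^ (N - j)) * h.symm

theorem iterate_derivative_dualPowAddC (N m : ℕ) :
    derivative^[m] (dualPowAddC f N) = C (N.descFactorial m : R) * dualPowAddC f (N - m) := by
  induction m with
  | zero => simp
  | succ m ih =>
    rw [Function.iterate_succ_apply', ih, derivative_C_mul, Nat.descFactorial_succ]
    obtain hm | hm := lt_or_ge m N
    · obtain ⟨r, hr⟩ : ∃ r, N - m = r + 1 := ⟨N - m - 1, by omega⟩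
      rw [hr, derivative_dualPowAddC_succ, show N - (m + 1) = r by omega, ← mul_assoc, ← C_mul]
      push_cast
      ring_nf
    · rw [Nat.sub_eq_zero_of_le hm, Nat.sub_eq_zero_of_le (by omega : N ≤ m + 1)]
      simp [dualPowAddC]

theorem le_rootMultiplicity_dualPowAddC [IsDomain R] [CharZero R] {N d : ℕ} {t : R}
    (hf : dualPowAddC f N ≠ 0) (hvanish : ∀ i < d, f ((X + C t) ^ (N - i)) = 0) :
    d ≤ (dualPowAddC f N).rootMultiplicity t := by
  rcases Nat.eq_zero_or_pos d with rfl | hd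
  · exact Nat.zero_le _
  suffices d - 1 < (dualPowAddC f N).rootMultiplicity t by omega
  refine lt_rootMultiplicity_of_isRoot_iterate_derivative hf fun m hm => ?_
  rw [iterate_derivative_dualPowAddC, IsRoot, eval_mul, eval_dualPowAddC, hvanish m (by omega),
    mul_zero]

theorem apply_X_pow_eq_zero_of_dualPowAddC_eq_zero [IsDomain R] [CharZero R] {N j : ℕ}
    (hf : dualPowAddC f N = 0) (hj : j ≤ N) : f (X ^ j) = 0 := by
  have hcoeff := coeff_dualPowAddC f N (N - j)
  rw [hf, coeff_zero, Nat.sub_sub_self hj, eq_comm, mul_eq_zero] at hcoeff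
  exact hcoeff.resolve_left (Nat.cast_ne_zero.2 (Nat.choose_pos (Nat.sub_le N j)).ne')

end DualPowAddC

theorem span_X_add_C_pow_eq_degreeLE {K ι : Type*} [Field K] [CharZero K] [Fintype ι]
    {a : ι → K} (ha : Function.Injective a) {k d : ℕ} (hk : k < Fintype.card ι * d) :
    Submodule.span K {q : K[X] | ∃ (ℓ : ι) (i : ℕ), i < d ∧ q = (X + C (a ℓ)) ^ (k - i)} =
      degreeLE K k := by
  classical
  refine le_antisymm (Submodule.span_le.2 ?_) ?_
  · rintro _ ⟨ℓ, i, -, rfl⟩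
    exact mem_degreeLE.2 (degree_le_of_natDegree_le ((natDegree_pow_X_add_C _ _).le.trans
      (by exact_mod_cast Nat.sub_le k i)))
  rw [degreeLE_eq_span_X_pow, Submodule.span_le]
  intro _ hmem
  obtain ⟨j, hj, rfl⟩ := mem_image.1 (mem_coe.1 hmem)
  by_contra hnot
  obtain ⟨f, hfj, hfspan⟩ := Submodule.exists_dual_map_eq_bot_of_notMem hnot inferInstance
  have hvanish : ∀ ℓ, ∀ i < d, f ((X + C (a ℓ)) ^ (k - i)) = 0 := fun ℓ i hi =>
    (Submodule.eq_bot_iff _).1 hfspan _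
      (Submodule.mem_map_of_mem (Submodule.subset_span ⟨ℓ, i, hi, rfl⟩))
  have hzero : dualPowAddC f k = 0 := by
    by_contra hne
    have hcard := card_mul_le_natDegree_of_le_rootMultiplicity ha
      fun ℓ => le_rootMultiplicity_dualPowAddC f hne (hvanish ℓ)
    exact absurd (hcard.trans (natDegree_dualPowAddC_le f k)) (not_le.2 hk)
  exact hfj (apply_X_pow_eq_zero_of_dualPowAddC_eq_zero f hzero (mem_range_succ_iff.1 hj))

end Polynomial

theorem stmt_1_general (k d : ℕ) (hd1 : 1 ≤ d)
    (a : Fin ((k + d) / d) → ℂ) (ha : Function.Injective a) :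
    Submodule.span ℂ
      {q : Polynomial ℂ | ∃ (ℓ : Fin ((k + d) / d)) (i : ℕ), i < d ∧
        q = (X + C (a ℓ)) ^ (k - i)} =
      Polynomial.degreeLE ℂ k := by
  refine span_X_add_C_pow_eq_degreeLE ha ?_
  rw [Fintype.card_fin, Nat.add_div_right k hd1, mul_comm]
  exact Nat.lt_mul_div_succ k hd1

theorem stmt_1 (k d : ℕ) (hk : 1 ≤ k) (hd1 : 1 ≤ d) (hd : d ≤ k)
    (a : Fin ((k + d) / d) → ℂ) (ha : Function.Injective a) :
    Submodule.span ℂ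
      {q : Polynomial ℂ | ∃ (ℓ : Fin ((k + d) / d)) (i : ℕ), i < d ∧
        q = (X + C (a ℓ)) ^ (k - i)} =
      Polynomial.degreeLE ℂ k :=
  stmt_1_general k d hd1 a ha
end

section
/- Let U ≤ M_n(ℂ) be a subspace that is upper right block closed, and suppose dim U = d with δ := d − 3n²/4 − n/2 + 1/4 > 0. Then for every integer k with |k − (n+1)/2| < √δ, there exist indices i ≠ j with i > k > j such that B_{ij} ≤ U. -/
/-- The upper right block subspace `B i j ≤ M_n(ℂ)`: the span of the elementary matrices
`E k ℓ` with `k ≤ i` and `ℓ ≥ j`. -/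
noncomputable def upperRightBlock (n : ℕ) (i j : Fin n) : Submodule ℂ (Matrix (Fin n) (Fin n) ℂ) :=
  Submodule.span ℂ
    {m : Matrix (Fin n) (Fin n) ℂ | ∃ k ℓ : Fin n, k ≤ i ∧ j ≤ ℓ ∧ m = Matrix.single k ℓ 1}

/-- `U` is upper right block closed if whenever `u ∈ U` has `u i j ≠ 0` with `i ≠ j`,
then `B i j ≤ U`. -/
def UpperRightBlockClosed {n : ℕ} (U : Submodule ℂ (Matrix (Fin n) (Fin n) ℂ)) : Prop :=
  ∀ u ∈ U, ∀ i j : Fin n, i ≠ j → u i j ≠ 0 → upperRightBlock n i j ≤ U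

/-!
If no block `B i j` with `i > k > j` lies in `U`, block closedness forces every `u ∈ U` to vanish
on the `(n - k)(k - 1)` positions `(i, j)` with `i > k > j`, so
`d ≤ n² - (n - k)(k - 1)`. This is exactly `δ ≤ (k - (n + 1)/2)²`, contradicting
`|k - (n + 1)/2| < √δ`.
-/

open Finset

theorem Submodule.finrank_add_card_le_of_entry_eq_zero {K m n : Type*} [Field K] [Fintype m]
    [Fintype n] (U : Submodule K (Matrix m n K)) (S : Finset (m × n))
    (hS : ∀ u ∈ U, ∀ p ∈ S, u p.1 p.2 = 0) :
    Module.finrank K U + #S ≤ Fintype.card m * Fintype.card n := by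
  classical
  let φ : Matrix m n K →ₗ[K] (S → K) :=
    LinearMap.pi fun p => Matrix.entryLinearMap K K p.1.1 p.1.2
  have hφ : Function.Surjective φ := fun f =>
    ⟨Matrix.of fun i j => if h : (i, j) ∈ S then f ⟨(i, j), h⟩ else 0, by
      ext ⟨p, hp⟩; simp [φ, hp]⟩
  have hU : U ≤ LinearMap.ker φ := fun u hu => by
    ext p; exact hS u hu p p.2
  have hrank := LinearMap.finrank_range_add_finrank_ker φ
  rw [LinearMap.range_eq_top.2 hφ, finrank_top, Module.finrank_fintype_fun_eq_card,
    Fintype.card_coe, Module.finrank_matrix, Module.finrank_self, mul_one] at hrank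
  have := Submodule.finrank_mono hU
  omega

-- In `1`-based indexing, the positions `(i, j)` with `i > k > j`.
def lowerLeftPositions (n k : ℕ) : Finset (Fin n × Fin n) :=
  {p | k ≤ p.1 ∧ (p.2 : ℕ) + 1 < k}

theorem card_lowerLeftPositions (n k : ℕ) :
    #(lowerLeftPositions n k) = (n - k) * (k - 1) := by
  have hfst : #{i : Fin n | k ≤ (i : ℕ)} = n - k := by
    have := Fin.card_filter_val_lt (n := n) (m := k)
    have hc := card_filter_add_card_filter_not (s := (univ : Finset (Fin n)))
      (fun i : Fin n => (i : ℕ) < k)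
    simp only [not_lt, card_univ, Fintype.card_fin] at hc
    omega
  have hsnd : #{j : Fin n | (j : ℕ) + 1 < k} = min n (k - 1) := by
    simpa [Nat.lt_sub_iff_add_lt] using Fin.card_filter_val_lt (n := n) (m := k - 1)
  have hprod : lowerLeftPositions n k =
      (univ.filter fun i : Fin n => k ≤ (i : ℕ)) ×ˢ
        (univ.filter fun j : Fin n => (j : ℕ) + 1 < k) := by
    ext; simp [lowerLeftPositions]
  rw [hprod, card_product, hfst, hsnd]
  rcases le_or_gt k n with hkn | hkn
  · rw [min_eq_right (by omega)]
  · simp [Nat.sub_eq_zero_of_le hkn.le]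

-- The truncated product `(n - k) * (k - 1)` vanishes exactly when the integer one is `≤ 0`.
theorem int_add_mul_le_of_add_mul_le {d n k : ℕ} (h : d + (n - k) * (k - 1) ≤ n * n) :
    (d : ℤ) + ((n : ℤ) - k) * ((k : ℤ) - 1) ≤ n * n := by
  rcases Nat.eq_zero_or_pos k with rfl | hk
  · simp only [Nat.zero_sub, mul_zero, add_zero] at h
    push_cast
    nlinarith
  rcases le_or_gt k n with hkn | hkn
  · have hℤ := (Nat.cast_le (α := ℤ)).2 h
    push_cast [hkn, hk] at hℤ
    exact hℤ
  · rw [Nat.sub_eq_zero_of_le hkn.le, zero_mul, add_zero] at h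
    have hd : (d : ℤ) ≤ n * n := by exact_mod_cast h
    nlinarith [(show (n : ℤ) < k by exact_mod_cast hkn), (show (1 : ℤ) ≤ k by exact_mod_cast hk)]

theorem sub_le_sq_of_add_mul_le {d n k : ℕ} (h : d + (n - k) * (k - 1) ≤ n * n) :
    (d : ℝ) - 3 * n ^ 2 / 4 - n / 2 + 1 / 4 ≤ ((k : ℝ) - (n + 1) / 2) ^ 2 := by
  have hℝ : (d : ℝ) + ((n : ℝ) - k) * ((k : ℝ) - 1) ≤ n * n := by
    exact_mod_cast int_add_mul_le_of_add_mul_le h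
  linarith [show ((k : ℝ) - (n + 1) / 2) ^ 2 =
    n * n - ((n : ℝ) - k) * ((k : ℝ) - 1) - 3 * n ^ 2 / 4 - n / 2 + 1 / 4 by ring]

theorem stmt_5_general (n d : ℕ) (U : Submodule ℂ (Matrix (Fin n) (Fin n) ℂ))
    (hclosed : UpperRightBlockClosed U) (hdim : Module.finrank ℂ U = d) :
    ∀ k : ℕ, |(k : ℝ) - (n + 1) / 2| <
        Real.sqrt ((d : ℝ) - 3 * n ^ 2 / 4 - n / 2 + 1 / 4) →
      ∃ i j : Fin n, i ≠ j ∧ (i : ℕ) + 1 > k ∧ k > (j : ℕ) + 1 ∧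
        upperRightBlock n i j ≤ U := by
  intro k hk
  by_contra! hnone
  have hvanish : ∀ u ∈ U, ∀ p ∈ lowerLeftPositions n k, u p.1 p.2 = 0 := by
    rintro u hu ⟨i, j⟩ hp
    simp only [lowerLeftPositions, mem_filter_univ] at hp
    have hij : i ≠ j := Fin.ne_of_val_ne (by omega)
    by_contra hu0
    exact hnone i j hij (by omega) hp.2 (hclosed u hu i j hij hu0)
  have hcount := U.finrank_add_card_le_of_entry_eq_zero _ hvanish
  rw [hdim, card_lowerLeftPositions, Fintype.card_fin] at hcount
  have hsq := (Real.lt_sqrt (abs_nonneg _)).1 hk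
  rw [sq_abs] at hsq
  linarith [sub_le_sq_of_add_mul_le hcount]

/-- Indices are written `1`-based via `(i : ℕ) + 1` for `i : Fin n`. -/
theorem stmt_5 (n d : ℕ) (U : Submodule ℂ (Matrix (Fin n) (Fin n) ℂ))
    (hclosed : UpperRightBlockClosed U) (hdim : Module.finrank ℂ U = d)
    (hδ : (0 : ℝ) < (d : ℝ) - 3 * n ^ 2 / 4 - n / 2 + 1 / 4) :
    ∀ k : ℕ, |(k : ℝ) - (n + 1) / 2| <
        Real.sqrt ((d : ℝ) - 3 * n ^ 2 / 4 - n / 2 + 1 / 4) →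
      ∃ i j : Fin n, i ≠ j ∧ (i : ℕ) + 1 > k ∧ k > (j : ℕ) + 1 ∧
        upperRightBlock n i j ≤ U :=
  stmt_5_general n d U hclosed hdim
end

section
/- Let n ≥ 3 and let U = span⟨E₁₁ − E_nn⟩ + B_{n−1,2} ≤ sl_n(ℂ), where B_{n−1,2} is the span of elementary matrices E_{kℓ} with k ≤ n−1 and ℓ ≥ 2 intersected with sl_n(ℂ). Then dim U = (n−1)² and for every g ∈ SL_n(ℂ), U + gUg⁻¹ ≠ sl_n(ℂ). -/
/-- The Lie algebra `sl_n(ℂ)` of traceless matrices, as a subspace of `M_n(ℂ)`. -/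
noncomputable def sln (n : ℕ) : Submodule ℂ (Matrix (Fin n) (Fin n) ℂ) :=
  LinearMap.ker (Matrix.traceLinearMap (Fin n) ℂ ℂ)

/-- Conjugation by `g ∈ SL_n(ℂ)` as a linear map `x ↦ g x g⁻¹`. -/
noncomputable def slConj {n : ℕ} (g : Matrix.SpecialLinearGroup (Fin n) ℂ) :
    Matrix (Fin n) (Fin n) ℂ →ₗ[ℂ] Matrix (Fin n) (Fin n) ℂ where
  toFun x := (g : Matrix (Fin n) (Fin n) ℂ) * x * ((g⁻¹ : Matrix.SpecialLinearGroup (Fin n) ℂ) : Matrix (Fin n) (Fin n) ℂ)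
  map_add' x y := by simp [Matrix.mul_add, Matrix.add_mul]
  map_smul' c x := by simp [Matrix.mul_smul, Matrix.smul_mul]

/-- The subspace `B_{n−1,2} ∩ sl_n(ℂ)`: the span of those elementary matrices `E k ℓ`
(`1`-based indices) with `k ≤ n−1`, `ℓ ≥ 2`, intersected with the traceless matrices. -/
noncomputable def Bn12 (n : ℕ) : Submodule ℂ (Matrix (Fin n) (Fin n) ℂ) :=
  (Submodule.span ℂ
    {m : Matrix (Fin n) (Fin n) ℂ |
      ∃ k ℓ : Fin n, (k : ℕ) + 1 ≤ n - 1 ∧ 2 ≤ (ℓ : ℕ) + 1 ∧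
        m = Matrix.single k ℓ 1}) ⊓ sln n


/-!
Under the trace form `⟨x, y⟩ = tr (x y)` the annihilator of `sl_n` is the scalars, so it suffices
to find a non-scalar `y` with both `y` and `g⁻¹ y g` orthogonal to `U`. Matrices supported on the
first row and the last column are orthogonal to `B_{n-1,2}`. With `E = E_{1n}`, both
`y = α g E + β E g⁻¹` and `g⁻¹ y g = α E g + β g⁻¹ E` have this shape, and both are orthogonal to
`E₁₁ - E_nn` as soon as `α g_{n1} = β (g⁻¹)_{n1}`. Such `(α, β)` can be chosen with `y ≠ 0`, and
`y` vanishes at `(2, 2)`, so it is not scalar.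

For the dimension, `B_{n-1,2}` is a hyperplane in the `(n-1)²`-dimensional span of its elementary
matrices, and `E₁₁ - E_nn` is independent of it since it is nonzero at `(n, n)`.
-/

open Matrix Submodule Module

section

variable {K ι : Type*} [Field K] [DecidableEq ι]

variable (K) in
def blockSpan (q p : ι) : Submodule K (Matrix ι ι K) :=
  span K (Set.range fun kl : {k // k ≠ q} × {l // l ≠ p} => single (kl.1 : ι) (kl.2 : ι) (1 : K))

theorem apply_eq_zero_of_mem_blockSpan {q p : ι} {m : Matrix ι ι K} (hm : m ∈ blockSpan K q p)
    (j : ι) : m q j = 0 := by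
  induction hm using span_induction with
  | mem x hx =>
    obtain ⟨⟨⟨k, hk⟩, l, -⟩, rfl⟩ := hx
    exact single_apply_of_row_ne hk _ _ _
  | zero => rfl
  | add x y _ _ hx hy => simp [hx, hy]
  | smul c x _ hx => simp [hx]

variable [Fintype ι]

-- Supported on row `p` and column `q`; these span the trace-orthogonal complement of
-- `blockSpan K q p`.
def hook (p q : ι) (P Q : Matrix ι ι K) : Matrix ι ι K :=
  P * single p q 1 + single p q 1 * Q

theorem hook_apply (p q : ι) (P Q : Matrix ι ι K) (i j : ι) :
    hook p q P Q i j = (if j = q then P i p else 0) + (if i = p then Q q j else 0) := by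
  by_cases hj : j = q <;> by_cases hi : i = p <;> simp [hook, hi, hj]

theorem mul_hook_mul {G G' : Matrix ι ι K} (h : G' * G = 1) (α β : K) (p q : ι) :
    G' * hook p q (α • G) (β • G') * G = hook p q (β • G') (α • G) := by
  simp only [hook, Matrix.mul_add, Matrix.add_mul, Matrix.smul_mul, Matrix.mul_smul,
    ← Matrix.mul_assoc, h, Matrix.one_mul]
  rw [Matrix.mul_assoc _ G' G, h, Matrix.mul_one, add_comm]

theorem exists_hook_ne_zero {p q : ι} (hpq : p ≠ q) {G G' : Matrix ι ι K}
    (h : G' * G = 1) : ∃ α β : K, α * G q p = β * G' q p ∧ hook p q (α • G) (β • G') ≠ 0 := by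
  have hGp : ∃ i, G i p ≠ 0 := by
    by_contra! hG
    simpa [mul_apply, hG] using congr_fun (congr_fun h p) p
  have hG'q : ∃ j, G' q j ≠ 0 := by
    by_contra! hG'
    simpa [mul_apply, hG'] using congr_fun (congr_fun h q) q
  by_cases hGqp : G q p = 0
  · obtain ⟨i, hi⟩ := hGp
    refine ⟨1, 0, by simp [hGqp], fun h0 => hi ?_⟩
    simpa [hook_apply] using congr_fun (congr_fun h0 i) q
  by_cases hG'qp : G' q p = 0
  · obtain ⟨j, hj⟩ := hG'q
    refine ⟨0, 1, by simp [hG'qp], fun h0 => hj ?_⟩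
    simpa [hook_apply] using congr_fun (congr_fun h0 p) j
  refine ⟨G' q p, G q p, mul_comm _ _, fun h0 => ?_⟩
  simpa [hook_apply, hpq.symm, hGqp, hG'qp] using congr_fun (congr_fun h0 q) q

variable (K) in
def blockSubspace (p q : ι) : Submodule K (Matrix ι ι K) :=
  span K {single p p 1 - single q q 1} ⊔
    (blockSpan K q p ⊓ LinearMap.ker (traceLinearMap ι K K))

theorem finrank_blockSpan (q p : ι) :
    finrank K (blockSpan K q p) = (Fintype.card ι - 1) ^ 2 := by
  have hinj : Function.Injective
      fun kl : {k // k ≠ q} × {l // l ≠ p} => ((kl.1 : ι), (kl.2 : ι)) :=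
    fun a b h => Prod.ext (Subtype.ext (Prod.mk.inj h).1) (Subtype.ext (Prod.mk.inj h).2)
  have hli : LinearIndependent K
      fun kl : {k // k ≠ q} × {l // l ≠ p} => single (kl.1 : ι) (kl.2 : ι) (1 : K) := by
    convert (stdBasis K ι ι).linearIndependent.comp _ hinj with kl
    exact (stdBasis_eq_single ..).symm
  rw [blockSpan, finrank_span_eq_card hli, Fintype.card_prod, Fintype.card_subtype_compl,
    Fintype.card_subtype_compl, Fintype.card_subtype_eq, Fintype.card_subtype_eq, sq]

theorem finrank_blockSpan_inf_ker_trace {p q r : ι} (hrq : r ≠ q) (hrp : r ≠ p) :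
    finrank K ↥(blockSpan K q p ⊓ LinearMap.ker (traceLinearMap ι K K)) + 1 =
      (Fintype.card ι - 1) ^ 2 := by
  set f := (traceLinearMap ι K K).domRestrict (blockSpan K q p)
  have hsingle : single r r 1 ∈ blockSpan K q p := subset_span ⟨(⟨r, hrq⟩, ⟨r, hrp⟩), rfl⟩
  have hf : LinearMap.range f = ⊤ :=
    LinearMap.range_eq_top.2 fun c => ⟨c • ⟨_, hsingle⟩, by simp [f]⟩
  have := LinearMap.finrank_range_add_finrank_ker f
  rw [hf, finrank_top, finrank_self, LinearMap.ker_domRestrict, ← finrank_map_subtype_eq,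
    map_comap_subtype, finrank_blockSpan] at this
  omega

theorem finrank_blockSubspace {p q r : ι} (hpq : p ≠ q) (hrq : r ≠ q) (hrp : r ≠ p) :
    finrank K (blockSubspace K p q) = (Fintype.card ι - 1) ^ 2 := by
  rw [blockSubspace]
  set D : Matrix ι ι K := single p p 1 - single q q 1
  have hDqq : D q q = -1 := by simp [D, single_apply_of_row_ne hpq]
  have hD : D ≠ 0 := fun h => by simp [h] at hDqq
  have hdisj : span K {D} ⊓ (blockSpan K q p ⊓ LinearMap.ker (traceLinearMap ι K K)) = ⊥ := by
    refine eq_bot_iff.2 fun x hx => ?_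
    obtain ⟨hxD, hxB, -⟩ := hx
    obtain ⟨c, rfl⟩ := mem_span_singleton.1 hxD
    have := apply_eq_zero_of_mem_blockSpan hxB q
    simp_all
  have hsum := finrank_sup_add_finrank_inf_eq (span K {D})
    (blockSpan K q p ⊓ LinearMap.ker (traceLinearMap ι K K))
  rw [hdisj, finrank_bot, finrank_span_singleton hD] at hsum
  have := finrank_blockSpan_inf_ker_trace (K := K) hrq hrp
  omega

theorem trace_mul_hook_eq_zero {p q : ι} (hpq : p ≠ q) {P Q : Matrix ι ι K} (h : P q p = Q q p)
    {x : Matrix ι ι K} (hx : x ∈ blockSubspace K p q) : trace (x * hook p q P Q) = 0 := by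
  set φ := (traceLinearMap ι K K).comp (LinearMap.mulRight K (hook p q P Q))
  suffices blockSubspace K p q ≤ LinearMap.ker φ from this hx
  refine sup_le ((span_singleton_le_iff_mem _ _).2 ?_) (inf_le_left.trans (span_le.2 ?_))
  · simp [φ, hook, Matrix.sub_mul, trace_single_mul, hpq, hpq.symm, h]
  · rintro _ ⟨⟨⟨k, hk⟩, l, hl⟩, rfl⟩
    simp [φ, hook, trace_single_mul, hk, hl]

theorem exists_trace_eq_zero_trace_mul_ne_zero {y : Matrix ι ι K} {r : ι} (hr : y r r = 0)
    (hy : y ≠ 0) : ∃ z : Matrix ι ι K, trace z = 0 ∧ trace (z * y) ≠ 0 := by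
  obtain ⟨l, k, hlk⟩ : ∃ l k, y l k ≠ 0 := by
    by_contra! h
    exact hy (Matrix.ext h)
  by_cases hkl : k = l
  · subst hkl
    have hkr : k ≠ r := by rintro rfl; exact hlk hr
    exact ⟨single k k 1 - single r r 1, by simp,
      by simpa [Matrix.sub_mul, trace_single_mul, hr] using hlk⟩
  · exact ⟨single k l 1, trace_single_eq_of_ne _ _ _ hkl, by simpa [trace_single_mul] using hlk⟩

theorem blockSubspace_sup_map_mulLeftRight_ne {p q r : ι} (hpq : p ≠ q) (hrq : r ≠ q)
    (hrp : r ≠ p) {G G' : Matrix ι ι K} (h : G' * G = 1) :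
    blockSubspace K p q ⊔ (blockSubspace K p q).map (LinearMap.mulLeftRight K (G, G')) ≠
      LinearMap.ker (traceLinearMap ι K K) := by
  obtain ⟨α, β, hαβ, hy⟩ := exists_hook_ne_zero hpq h
  set y := hook p q (α • G) (β • G')
  obtain ⟨z, hz, hzy⟩ := exists_trace_eq_zero_trace_mul_ne_zero
    (show y r r = 0 by simp [y, hook_apply, hrp, hrq]) hy
  have hU : ∀ x ∈ blockSubspace K p q, trace (x * y) = 0 := fun x hx =>
    trace_mul_hook_eq_zero hpq (by simpa [mul_comm] using hαβ) hx
  have hU' : ∀ x ∈ blockSubspace K p q, trace (G * x * G' * y) = 0 := fun x hx => by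
    rw [Matrix.mul_assoc G, Matrix.mul_assoc G, trace_mul_comm, Matrix.mul_assoc x,
      Matrix.mul_assoc x, mul_hook_mul h]
    exact trace_mul_hook_eq_zero hpq (by simpa [mul_comm] using hαβ.symm) hx
  set φ := (traceLinearMap ι K K).comp (LinearMap.mulRight K y)
  have hle : blockSubspace K p q ⊔ (blockSubspace K p q).map (LinearMap.mulLeftRight K (G, G')) ≤
      LinearMap.ker φ :=
    sup_le (fun x hx => hU x hx) (map_le_iff_le_comap.2 fun x hx => hU' x hx)
  intro hsup
  exact hzy (hle (hsup ▸ hz))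

end

theorem Bn12_eq_blockSpan_inf_sln {n : ℕ} (hn : 0 < n) :
    Bn12 n = blockSpan ℂ (⟨n - 1, by omega⟩ : Fin n) ⟨0, hn⟩ ⊓ sln n := by
  rw [Bn12, blockSpan]
  congr 2
  ext m
  constructor
  · rintro ⟨k, l, hk, hl, rfl⟩
    exact ⟨(⟨k, by simp [Fin.ext_iff]; omega⟩, ⟨l, by simp [Fin.ext_iff]; omega⟩), rfl⟩
  · rintro ⟨⟨⟨k, hk⟩, l, hl⟩, rfl⟩
    simp only [ne_eq, Fin.ext_iff] at hk hl
    exact ⟨k, l, by omega, by omega, rfl⟩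

theorem stmt_7 (n : ℕ) (hn : 3 ≤ n)
    (U : Submodule ℂ (Matrix (Fin n) (Fin n) ℂ))
    (hUdef : U = Submodule.span ℂ
        {Matrix.single (⟨0, by omega⟩ : Fin n) (⟨0, by omega⟩ : Fin n) (1 : ℂ) -
          Matrix.single (⟨n - 1, by omega⟩ : Fin n) (⟨n - 1, by omega⟩ : Fin n) 1} ⊔
      Bn12 n) :
    Module.finrank ℂ U = (n - 1) ^ 2 ∧
    ∀ g : Matrix.SpecialLinearGroup (Fin n) ℂ,
      U ⊔ Submodule.map (slConj g) U ≠ sln n := by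
  set p : Fin n := ⟨0, by omega⟩
  set q : Fin n := ⟨n - 1, by omega⟩
  set r : Fin n := ⟨1, by omega⟩
  have hpq : p ≠ q := by simp [p, q, Fin.ext_iff]; omega
  have hrq : r ≠ q := by simp [r, q, Fin.ext_iff]; omega
  have hrp : r ≠ p := by simp [r, p, Fin.ext_iff]
  have hU : U = blockSubspace ℂ p q := by rw [hUdef, Bn12_eq_blockSpan_inf_sln]; rfl
  subst hU
  refine ⟨by rw [finrank_blockSubspace hpq hrq hrp, Fintype.card_fin], fun g => ?_⟩
  have hconj : slConj g = LinearMap.mulLeftRight ℂ ((g : Matrix (Fin n) (Fin n) ℂ), ↑g⁻¹) := rfl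
  have hinv : ((g⁻¹ : SpecialLinearGroup (Fin n) ℂ) : Matrix (Fin n) (Fin n) ℂ) * g = 1 :=
    congr_arg Subtype.val (inv_mul_cancel g)
  rw [hconj]
  exact blockSubspace_sup_map_mulLeftRight_ne hpq hrq hrp hinv
end

section
/- Let b ≤ sl_n(ℂ) be the Borel subalgebra of upper-triangular traceless matrices, and let F be the antidiagonal permutation matrix F_{ij} = δ_{i+j=n+1}. Then b + { [x,F] : x ∈ b } = sl_n(ℂ). -/
/-- Upper triangular matrices. -/
noncomputable def upperTriangular (n : ℕ) : Submodule ℂ (Matrix (Fin n) (Fin n) ℂ) where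
  carrier := {x | ∀ i j : Fin n, j < i → x i j = 0}
  add_mem' := by
    intro a b ha hb i j h
    simp [Matrix.add_apply, ha i j h, hb i j h]
  zero_mem' := by intro i j h; simp
  smul_mem' := by
    intro c a ha i j h
    simp [Matrix.smul_apply, ha i j h]

/-- The Borel subalgebra `b` of upper triangular traceless matrices. -/
noncomputable def borelSubalg (n : ℕ) : Submodule ℂ (Matrix (Fin n) (Fin n) ℂ) :=
  sln n ⊓ upperTriangular n

noncomputable def xmat (n : ℕ) (a : Matrix (Fin n) (Fin n) ℂ) : Matrix (Fin n) (Fin n) ℂ :=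
  Matrix.of fun p q =>
    if (p : ℕ) < (q : ℕ) then
      if n - 1 < (p : ℕ) + (q : ℕ) then a p q.rev
      else if (p : ℕ) + (q : ℕ) < n - 1 then -a p.rev q else 0
    else if p = q then
      if n - 1 < 2 * (p : ℕ) then a p p.rev / 2
      else if 2 * (p : ℕ) < n - 1 then -a p.rev p / 2 else 0
    else 0

lemma xmat_apply (n : ℕ) (a : Matrix (Fin n) (Fin n) ℂ) (p q : Fin n) :
    xmat n a p q =
    if (p : ℕ) < (q : ℕ) then
      if n - 1 < (p : ℕ) + (q : ℕ) then a p q.rev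
      else if (p : ℕ) + (q : ℕ) < n - 1 then -a p.rev q else 0
    else if p = q then
      if n - 1 < 2 * (p : ℕ) then a p p.rev / 2
      else if 2 * (p : ℕ) < n - 1 then -a p.rev p / 2 else 0
    else 0 := rfl

lemma mulF_apply {n : ℕ} {F : Matrix (Fin n) (Fin n) ℂ}
    (hF : ∀ i j : Fin n, F i j = if (i : ℕ) + (j : ℕ) = n - 1 then 1 else 0)
    (x : Matrix (Fin n) (Fin n) ℂ) (i j : Fin n) :
    (x * F) i j = x i j.rev := by
  rw [Matrix.mul_apply]
  rw [Finset.sum_eq_single j.rev]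
  · rw [hF, Fin.val_rev, if_pos (by omega), mul_one]
  · intro k _ hk
    rw [hF, if_neg, mul_zero]
    intro h
    exact hk (Fin.ext (by rw [Fin.val_rev]; omega))
  · intro h; exact absurd (Finset.mem_univ _) h

lemma Fmul_apply {n : ℕ} {F : Matrix (Fin n) (Fin n) ℂ}
    (hF : ∀ i j : Fin n, F i j = if (i : ℕ) + (j : ℕ) = n - 1 then 1 else 0)
    (x : Matrix (Fin n) (Fin n) ℂ) (i j : Fin n) :
    (F * x) i j = x i.rev j := by
  rw [Matrix.mul_apply]
  rw [Finset.sum_eq_single i.rev]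
  · rw [hF, Fin.val_rev, if_pos (by omega), one_mul]
  · intro k _ hk
    rw [hF, if_neg, zero_mul]
    intro h
    exact hk (Fin.ext (by rw [Fin.val_rev]; omega))
  · intro h; exact absurd (Finset.mem_univ _) h

lemma xmat_upper (n : ℕ) (a : Matrix (Fin n) (Fin n) ℂ) : xmat n a ∈ upperTriangular n := by
  intro i j h
  rw [Fin.lt_def] at h
  rw [xmat_apply, if_neg (by omega), if_neg (by intro e; rw [e] at h; omega)]

lemma xmat_trace (n : ℕ) (a : Matrix (Fin n) (Fin n) ℂ) : (xmat n a).trace = 0 := by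
  rw [Matrix.trace]
  have hd : ∀ p : Fin n, (xmat n a).diag p =
      if n - 1 < 2 * (p : ℕ) then a p p.rev / 2
      else if 2 * (p : ℕ) < n - 1 then -a p.rev p / 2 else 0 := by
    intro p
    rw [Matrix.diag_apply, xmat_apply, if_neg (lt_irrefl _), if_pos rfl]
  refine Finset.sum_involution (fun p _ => p.rev) ?_ ?_ (fun p _ => Finset.mem_univ _)
    (fun p _ => Fin.rev_rev p)
  · intro p _
    rw [hd, hd, Fin.val_rev, Fin.rev_rev]
    have hp : (p : ℕ) < n := p.isLt
    rcases Nat.lt_trichotomy (2 * (p : ℕ)) (n - 1) with h | h | h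
    · rw [if_neg (by omega), if_pos h, if_pos (by omega)]; ring
    · rw [if_neg (by omega), if_neg (by omega), if_neg (by omega), if_neg (by omega)]; ring
    · rw [if_pos h, if_neg (by omega), if_pos (by omega)]; ring
  · intro p _ hne heq
    apply hne
    have hv : n - ((p : ℕ) + 1) = (p : ℕ) := by
      have := congrArg Fin.val heq
      simpa [Fin.val_rev] using this
    have hp : (p : ℕ) < n := p.isLt
    rw [hd, if_neg (by omega), if_neg (by omega)]

theorem stmt_10 (n : ℕ) (F : Matrix (Fin n) (Fin n) ℂ)
    (hF : ∀ i j : Fin n, F i j = if (i : ℕ) + (j : ℕ) = n - 1 then 1 else 0) :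
    borelSubalg n ⊔
      Submodule.map (LinearMap.mulRight ℂ F - LinearMap.mulLeft ℂ F) (borelSubalg n) =
    sln n := by
  have htrF : ∀ x : Matrix (Fin n) (Fin n) ℂ, (x * F - F * x).trace = 0 := by
    intro x
    rw [Matrix.trace_sub, Matrix.trace_mul_comm, sub_self]
  apply le_antisymm
  · apply sup_le
    · exact inf_le_left
    · rintro _ ⟨x, _, rfl⟩
      simp only [sln, LinearMap.mem_ker, Matrix.traceLinearMap_apply, LinearMap.sub_apply,
        LinearMap.mulRight_apply, LinearMap.mulLeft_apply]
      exact htrF x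
  · intro a ha
    have hatr : a.trace = 0 := ha
    have hz : (LinearMap.mulRight ℂ F - LinearMap.mulLeft ℂ F) (xmat n a) =
        xmat n a * F - F * xmat n a := rfl
    have hxb : xmat n a ∈ borelSubalg n := ⟨xmat_trace n a, xmat_upper n a⟩
    have hyu : a - (xmat n a * F - F * xmat n a) ∈ upperTriangular n := by
      intro i j hij
      rw [Fin.lt_def] at hij
      have hi : (i : ℕ) < n := i.isLt
      have hj : (j : ℕ) < n := j.isLt
      rw [Matrix.sub_apply, Matrix.sub_apply, mulF_apply hF, Fmul_apply hF]
      rw [xmat_apply, xmat_apply, Fin.val_rev, Fin.val_rev]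
      rcases Nat.lt_trichotomy ((i : ℕ) + (j : ℕ)) (n - 1) with h | h | h
      · rw [if_pos (by omega), if_pos (by omega), Fin.rev_rev,
          if_neg (by omega), if_neg (by simp only [Fin.ext_iff, Fin.val_rev]; omega)]
        ring
      · have hji : j.rev = i := Fin.ext (by rw [Fin.val_rev]; omega)
        have hij' : i.rev = j := Fin.ext (by rw [Fin.val_rev]; omega)
        rw [hji, hij', if_neg (by omega), if_pos rfl, if_pos (by omega),
          if_neg (by omega), if_pos rfl, if_neg (by omega), if_pos (by omega), hji]
        ring
      · rw [if_neg (by omega), if_neg (by simp only [Fin.ext_iff, Fin.val_rev]; omega),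
          if_pos (by omega), if_neg (by omega), if_pos (by omega), Fin.rev_rev]
        ring
    have hytr : (a - (xmat n a * F - F * xmat n a)).trace = 0 := by
      rw [Matrix.trace_sub, htrF, hatr, sub_zero]
    have key : a = (a - (xmat n a * F - F * xmat n a)) + (xmat n a * F - F * xmat n a) := by
      abel
    rw [key]
    exact Submodule.add_mem_sup ⟨hytr, hyu⟩ ⟨xmat n a, hxb, hz⟩
end

section
/- Let M_n⁰(ℂ) denote the space of n×n complex matrices with zero diagonal. There exists g ∈ GL_n(ℂ) such that M_n⁰(ℂ) + g·M_n⁰(ℂ)·g⁻¹ = sl_n(ℂ). Concretely, one may take g = ∏_{i=1}^{n−1}(I + E_{i,i+1}), i.e., the matrix with entries g_{ij} = 1 if i ≤ j and 0 otherwise. -/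
/-- The subspace `M_n⁰(ℂ)` of matrices with zero diagonal. -/
noncomputable def zeroDiag (n : ℕ) : Submodule ℂ (Matrix (Fin n) (Fin n) ℂ) where
  carrier := {x | ∀ i : Fin n, x i i = 0}
  add_mem' := by intro a b ha hb i; simp [Matrix.add_apply, ha i, hb i]
  zero_mem' := by intro i; simp
  smul_mem' := by intro c a ha i; simp [Matrix.smul_apply, ha i]

/-- Conjugation by `g ∈ GL_n(ℂ)` as a linear map `x ↦ g x g⁻¹`. -/
noncomputable def glConj {n : ℕ} (g : GL (Fin n) ℂ) :
    Matrix (Fin n) (Fin n) ℂ →ₗ[ℂ] Matrix (Fin n) (Fin n) ℂ where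
  toFun x := (g : Matrix (Fin n) (Fin n) ℂ) * x * ((g⁻¹ : GL (Fin n) ℂ) : Matrix (Fin n) (Fin n) ℂ)
  map_add' x y := by simp [Matrix.mul_add, Matrix.add_mul]
  map_smul' c x := by simp [Matrix.mul_smul, Matrix.smul_mul]

/-
Take g upper unitriangular with all entries above the diagonal equal to 1, so that
g⁻¹ = 1 - N with N the superdiagonal of ones. The rank one matrix g E_{i+1,i} g⁻¹ is the product
of column i+1 of g and row i of g⁻¹, whose diagonal is E_{ii} - E_{i+1,i+1}. Since E_{i+1,i} has
zero diagonal, every such difference, and hence every traceless diagonal matrix, lies in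
M⁰ + g M⁰ g⁻¹; the off-diagonal part of a traceless matrix lies in M⁰.
-/

open Matrix

theorem Submodule.mem_of_sum_eq_zero_of_single_castSucc_sub_single_succ_mem {R : Type*} [Ring R]
    {m : ℕ} {W : Submodule R (Fin (m + 1) → R)}
    (hW : ∀ i : Fin m, Pi.single i.castSucc 1 - Pi.single i.succ 1 ∈ W)
    {d : Fin (m + 1) → R} (hd : ∑ i, d i = 0) : d ∈ W := by
  have single_sub_single_zero_mem : ∀ i, Pi.single i 1 - Pi.single 0 1 ∈ W := by
    intro i
    induction i using Fin.induction with
    | zero => simp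
    | succ i ih => simpa using W.sub_mem ih (hW i)
  have hd_expand : d = ∑ i, d i • (Pi.single i 1 - Pi.single 0 1 : Fin (m + 1) → R) := by
    simp only [smul_sub, Finset.sum_sub_distrib, ← Finset.sum_smul, hd, zero_smul, sub_zero]
    simp [← Pi.single_smul', Finset.univ_sum_single]
  rw [hd_expand]
  exact W.sum_mem fun i _ => W.smul_mem _ (single_sub_single_zero_mem i)

theorem Matrix.mul_single_one_mul_apply_self {R : Type*} [Semiring R] {m : Type*} [Fintype m]
    [DecidableEq m] (M N : Matrix m m R) (i j k : m) :
    (M * (single j i 1 : Matrix m m R) * N) k k = M k j * N i k := by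
  simp [mul_apply, single_apply, ite_and]

namespace UpperOnes

section Ring

variable {R : Type*} [Ring R] {n : ℕ}

variable (R n) in
def upperOnes : Matrix (Fin n) (Fin n) R :=
  of fun i j => if i ≤ j then 1 else 0

variable (R n) in
def superdiagOnes : Matrix (Fin n) (Fin n) R :=
  of fun i j => if (i : ℕ) + 1 = j then 1 else 0

theorem superdiagOnes_mul_upperOnes :
    superdiagOnes R n * upperOnes R n = of fun i j => if i < j then 1 else 0 := by
  ext i j
  simp only [mul_apply, superdiagOnes, upperOnes, of_apply, ite_mul, one_mul, zero_mul]
  by_cases hi : (i : ℕ) + 1 < n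
  · rw [Fintype.sum_eq_single ⟨i + 1, hi⟩ fun k hk => if_neg fun h => hk (Fin.ext h.symm)]
    grind
  · rw [if_neg (by grind), Finset.sum_eq_zero fun k _ => if_neg (by grind)]

theorem one_sub_superdiagOnes_mul_upperOnes :
    (1 - superdiagOnes R n) * upperOnes R n = 1 := by
  rw [sub_mul, one_mul, superdiagOnes_mul_upperOnes]
  ext i j
  simp only [upperOnes, Matrix.sub_apply, of_apply, one_apply]
  split_ifs <;> grind

theorem diag_upperOnes_mul_single_mul {m : ℕ} (i : Fin m) :
    diag (upperOnes R (m + 1) * single i.succ i.castSucc 1 * (1 - superdiagOnes R (m + 1))) =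
      Pi.single i.castSucc 1 - Pi.single i.succ 1 := by
  ext k
  rw [diag_apply, mul_single_one_mul_apply_self]
  simp only [upperOnes, superdiagOnes, of_apply, Matrix.sub_apply, one_apply, Pi.sub_apply,
    Pi.single_apply]
  split_ifs <;> grind

end Ring

def upperOnesGL (R : Type*) [CommRing R] (n : ℕ) : GL (Fin n) R :=
  ⟨upperOnes R n, 1 - superdiagOnes R n,
    mul_eq_one_comm.mp one_sub_superdiagOnes_mul_upperOnes, one_sub_superdiagOnes_mul_upperOnes⟩

end UpperOnes

open UpperOnes

variable {n : ℕ}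

theorem mem_sln_iff {x : Matrix (Fin n) (Fin n) ℂ} : x ∈ sln n ↔ x.trace = 0 := Iff.rfl

theorem zeroDiag_le_sln : zeroDiag n ≤ sln n := fun _ hx =>
  mem_sln_iff.mpr (Finset.sum_eq_zero fun i _ => hx i)

theorem map_glConj_le_sln (g : GL (Fin n) ℂ) {S : Submodule ℂ (Matrix (Fin n) (Fin n) ℂ)}
    (hS : S ≤ sln n) : S.map (glConj g) ≤ sln n := by
  rintro _ ⟨x, hx, rfl⟩
  exact mem_sln_iff.mpr ((trace_units_conj g x).trans (mem_sln_iff.mp (hS hx)))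

theorem sub_diagonal_diag_mem_zeroDiag (x : Matrix (Fin n) (Fin n) ℂ) :
    x - diagonal (diag x) ∈ zeroDiag n := fun i => by simp

theorem diagonal_diag_mem_zeroDiag_sup {S : Submodule ℂ (Matrix (Fin n) (Fin n) ℂ)}
    {y : Matrix (Fin n) (Fin n) ℂ} (hy : y ∈ S) : diagonal (diag y) ∈ zeroDiag n ⊔ S := by
  rw [← sub_sub_cancel y (diagonal (diag y))]
  exact sub_mem (Submodule.mem_sup_right hy)
    (Submodule.mem_sup_left (sub_diagonal_diag_mem_zeroDiag y))

theorem sln_le_zeroDiag_sup_map_upperOnesGL (m : ℕ) :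
    sln (m + 1) ≤ zeroDiag (m + 1) ⊔ (zeroDiag (m + 1)).map (glConj (upperOnesGL ℂ (m + 1))) := by
  intro x hx
  rw [← sub_add_cancel x (diagonal (diag x))]
  refine add_mem (Submodule.mem_sup_left (sub_diagonal_diag_mem_zeroDiag x)) ?_
  refine (Submodule.mem_comap (f := diagonalLinearMap _ ℂ ℂ)).mp
    (Submodule.mem_of_sum_eq_zero_of_single_castSucc_sub_single_succ_mem (fun i => ?_) (mem_sln_iff.mp hx))
  rw [Submodule.mem_comap, diagonalLinearMap_apply, ← diag_upperOnes_mul_single_mul]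
  refine diagonal_diag_mem_zeroDiag_sup ⟨single i.succ i.castSucc 1, fun k => ?_, rfl⟩
  simp only [single_apply]
  grind

theorem stmt_11 (n : ℕ) :
    ∃ g : GL (Fin n) ℂ,
      zeroDiag n ⊔ Submodule.map (glConj g) (zeroDiag n) = sln n := by
  cases n with
  | zero => exact ⟨1, Subsingleton.elim _ _⟩
  | succ m =>
    exact ⟨upperOnesGL ℂ (m + 1), le_antisymm
      (sup_le zeroDiag_le_sln (map_glConj_le_sln _ zeroDiag_le_sln))
      (sln_le_zeroDiag_sup_map_upperOnesGL m)⟩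
end

section
/- Let U = span⟨I, E₁₂⟩ ≤ M₂(ℂ). Then for all g, h ∈ GL₂(ℂ), gUg⁻¹ + hUh⁻¹ ≠ M₂(ℂ); but there exist g₁, g₂, g₃ ∈ GL₂(ℂ) with g₁Ug₁⁻¹ + g₂Ug₂⁻¹ + g₃Ug₃⁻¹ = M₂(ℂ). Hence the GL₂(ℂ)-additive diameter of M₂(ℂ) with respect to U is 3. -/
/-- `U = span⟨I, E₁₂⟩ ≤ M₂(ℂ)`. -/
noncomputable def U12 : Submodule ℂ (Matrix (Fin 2) (Fin 2) ℂ) :=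
  Submodule.span ℂ {(1 : Matrix (Fin 2) (Fin 2) ℂ), Matrix.single 0 1 1}

/-!
Every conjugate of `U` has dimension at most two and contains `I`, so two conjugates meet
nontrivially and their sum has dimension at most `2 + 2 - 1 = 3 < 4`. Conversely, conjugating
`E₁₂` by `1`, by the swap matrix and by `[[1,0],[1,1]]` gives `E₁₂`, `E₂₁` and `[[-1,1],[-1,1]]`;
together with `I` these span `M₂(ℂ)`.
-/

open Module Submodule

theorem Submodule.sup_ne_top_of_inf_ne_bot {K V : Type*} [DivisionRing K] [AddCommGroup V]
    [Module K V] [FiniteDimensional K V] {s t : Submodule K V} (hst : s ⊓ t ≠ ⊥)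
    (hdim : finrank K s + finrank K t ≤ finrank K V) : s ⊔ t ≠ ⊤ := by
  intro htop
  have hinf : 1 ≤ finrank K ↥(s ⊓ t) := one_le_finrank_iff.mpr hst
  have hsum := finrank_sup_add_finrank_inf_eq s t
  rw [htop, finrank_top] at hsum
  omega

theorem Submodule.eq_top_of_mem_fin_two {R : Type*} [Semiring R]
    {S : Submodule R (Matrix (Fin 2) (Fin 2) R)} (h00 : !![1, 0; 0, 0] ∈ S)
    (h01 : !![0, 1; 0, 0] ∈ S) (h10 : !![0, 0; 1, 0] ∈ S) (h11 : !![0, 0; 0, 1] ∈ S) :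
    S = ⊤ := by
  refine eq_top_iff'.mpr fun x => ?_
  have hx : x = x 0 0 • !![1, 0; 0, 0] + x 0 1 • !![0, 1; 0, 0] + x 1 0 • !![0, 0; 1, 0]
      + x 1 1 • !![0, 0; 0, 1] := by
    ext i j; fin_cases i <;> fin_cases j <;> simp
  rw [hx]
  exact S.add_mem (S.add_mem (S.add_mem (S.smul_mem _ h00) (S.smul_mem _ h01))
    (S.smul_mem _ h10)) (S.smul_mem _ h11)

section glConj

variable {n : ℕ}

theorem glConj_eq_iff {g : GL (Fin n) ℂ} {x y : Matrix (Fin n) (Fin n) ℂ} :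
    glConj g x = y ↔ (g : Matrix (Fin n) (Fin n) ℂ) * x = y * g :=
  Units.mul_inv_eq_iff_eq_mul g

theorem glConj_one (g : GL (Fin n) ℂ) : glConj g 1 = 1 :=
  glConj_eq_iff.mpr (by rw [mul_one, one_mul])

theorem mem_map_glConj_of_mul_eq {g : GL (Fin n) ℂ} {U : Submodule ℂ (Matrix (Fin n) (Fin n) ℂ)}
    {x y : Matrix (Fin n) (Fin n) ℂ} (hx : x ∈ U) (h : (g : Matrix (Fin n) (Fin n) ℂ) * x = y * g) :
    y ∈ U.map (glConj g) :=
  ⟨x, hx, glConj_eq_iff.mpr h⟩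

end glConj

theorem finrank_U12_le : finrank ℂ U12 ≤ 2 := by
  classical
  have h := finrank_span_finset_le_card (R := ℂ)
    ({1, Matrix.single 0 1 1} : Finset (Matrix (Fin 2) (Fin 2) ℂ))
  rw [Finset.coe_pair] at h
  exact h.trans Finset.card_le_two

theorem one_mem_map_glConj_U12 (g : GL (Fin 2) ℂ) : 1 ∈ U12.map (glConj g) :=
  ⟨1, subset_span (by simp), glConj_one g⟩

theorem single_zero_one_mem_U12 : !![0, 1; 0, 0] ∈ U12 := by
  have hE : (Matrix.single 0 1 1 : Matrix (Fin 2) (Fin 2) ℂ) = !![0, 1; 0, 0] := by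
    ext i j; fin_cases i <;> fin_cases j <;> rfl
  exact subset_span (by simp [hE])

theorem map_glConj_U12_sup_ne_top (g h : GL (Fin 2) ℂ) :
    U12.map (glConj g) ⊔ U12.map (glConj h) ≠ ⊤ := by
  refine sup_ne_top_of_inf_ne_bot ?_ ?_
  · exact (Submodule.ne_bot_iff _).mpr
      ⟨1, ⟨one_mem_map_glConj_U12 g, one_mem_map_glConj_U12 h⟩, one_ne_zero⟩
  · calc finrank ℂ (U12.map (glConj g)) + finrank ℂ (U12.map (glConj h))
        ≤ 2 + 2 := add_le_add ((finrank_map_le _ _).trans finrank_U12_le)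
          ((finrank_map_le _ _).trans finrank_U12_le)
      _ = finrank ℂ (Matrix (Fin 2) (Fin 2) ℂ) := by simp [finrank_matrix]

noncomputable def swapGL : GL (Fin 2) ℂ :=
  .mkOfDetNeZero !![0, 1; 1, 0] (by simp)

noncomputable def lowerGL : GL (Fin 2) ℂ :=
  .mkOfDetNeZero !![1, 0; 1, 1] (by simp)

theorem sup_map_glConj_U12_eq_top :
    U12.map (glConj 1) ⊔ U12.map (glConj swapGL) ⊔ U12.map (glConj lowerGL) = ⊤ := by
  set S := U12.map (glConj 1) ⊔ U12.map (glConj swapGL) ⊔ U12.map (glConj lowerGL)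
  have hI : 1 ∈ S := mem_sup_left <| mem_sup_left <| one_mem_map_glConj_U12 1
  have h01 : !![0, 1; 0, 0] ∈ S := mem_sup_left <| mem_sup_left <|
    mem_map_glConj_of_mul_eq single_zero_one_mem_U12 (by simp)
  have h10 : !![0, 0; 1, 0] ∈ S := mem_sup_left <| mem_sup_right <|
    mem_map_glConj_of_mul_eq single_zero_one_mem_U12 (by simp [swapGL])
  have hM : !![-1, 1; -1, 1] ∈ S := mem_sup_right <|
    mem_map_glConj_of_mul_eq single_zero_one_mem_U12 (by simp [lowerGL])
  have h00 : !![1, 0; 0, 0] ∈ S := by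
    have hsum : !![(1 : ℂ), 0; 0, 0] =
        (2 : ℂ)⁻¹ • (1 - !![-1, 1; -1, 1] + !![0, 1; 0, 0] - !![0, 0; 1, 0]) := by
      ext i j; fin_cases i <;> fin_cases j <;> norm_num
    rw [hsum]
    exact S.smul_mem _ (S.sub_mem (S.add_mem (S.sub_mem hI hM) h01) h10)
  have h11 : !![0, 0; 0, 1] ∈ S := by
    have hsub : !![(0 : ℂ), 0; 0, 1] = 1 - !![1, 0; 0, 0] := by
      ext i j; fin_cases i <;> fin_cases j <;> simp
    rw [hsub]
    exact S.sub_mem hI h00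
  exact eq_top_of_mem_fin_two h00 h01 h10 h11

theorem stmt_13 :
    (∀ g h : GL (Fin 2) ℂ,
      Submodule.map (glConj g) U12 ⊔ Submodule.map (glConj h) U12 ≠ ⊤) ∧
    (∃ g₁ g₂ g₃ : GL (Fin 2) ℂ,
      Submodule.map (glConj g₁) U12 ⊔ Submodule.map (glConj g₂) U12 ⊔
        Submodule.map (glConj g₃) U12 = ⊤) :=
  ⟨map_glConj_U12_sup_ne_top, 1, swapGL, lowerGL, sup_map_glConj_U12_eq_top⟩
end

section
/- Let V = ℂ[X,Y]_k with k ≥ 2, with the standard sl₂(ℂ)-action by operators E_k, H_k, F_k where E_k·eᵢ = (k−i)e_{i+1}, H_k·eᵢ = (2i−k)eᵢ, F_k·eᵢ = i·e_{i−1}. Let U = span⟨e_j, …, e_k⟩ with j > 1. Then for any finite collection of elements x₁, …, x_m ∈ sl₂(ℂ), the subspace U + ∑ᵢ ρ(xᵢ)·U is contained in span⟨e_{j−1}, …, e_k⟩ and in particular never equals V. -/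
/-- The lowering operator `F_k`: `F_k · e_i = i · e_{i-1}`, i.e. `(F_k x)_m = (m+1) x_{m+1}`. -/
noncomputable def lowerOp (k : ℕ) : Module.End ℂ (Fin (k + 1) → ℂ) where
  toFun x := fun m =>
    if h : (m : ℕ) < k then (((m : ℕ) + 1 : ℕ) : ℂ) * x ⟨(m : ℕ) + 1, by omega⟩ else 0
  map_add' x y := by
    funext m; by_cases h : (m : ℕ) < k <;> simp [h, mul_add]
  map_smul' c x := by
    funext m; by_cases h : (m : ℕ) < k <;> simp [h] <;> ring

/-- The raising operator `E_k`: `E_k · e_i = (k − i) e_{i+1}`, i.e.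
`(E_k x)_m = (k − (m−1)) x_{m−1}` for `m ≥ 1`. -/
noncomputable def raiseOp (k : ℕ) : Module.End ℂ (Fin (k + 1) → ℂ) where
  toFun x := fun m =>
    if h : 0 < (m : ℕ) then ((k - ((m : ℕ) - 1) : ℕ) : ℂ) * x ⟨(m : ℕ) - 1, by omega⟩ else 0
  map_add' x y := by
    funext m; simp only [Pi.add_apply]; split_ifs <;> ring
  map_smul' c x := by
    funext m; simp only [Pi.smul_apply, smul_eq_mul, RingHom.id_apply]; split_ifs <;> ring

/-- The Cartan operator `H_k`: `H_k · e_i = (2i − k) e_i`. -/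
noncomputable def cartanOp (k : ℕ) : Module.End ℂ (Fin (k + 1) → ℂ) where
  toFun x := fun m => ((2 * (m : ℕ) : ℕ) - (k : ℂ)) * x m
  map_add' x y := by funext m; simp [mul_add]
  map_smul' c x := by funext m; simp; ring

/-! `E` and `H` preserve `span ⟨e_c, …, e_k⟩` and `F` lowers indices by one, so every element of
`sl₂` maps `span ⟨e_j, …, e_k⟩` into `span ⟨e_{j-1}, …, e_k⟩`, which contains `U` and misses `e_0`
as soon as `j > 1`. -/

open Submodule

theorem span_single_one_eq_pi {R ι : Type*} [Semiring R] [Fintype ι] [DecidableEq ι]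
    (p : ι → Prop) :
    span R {v : ι → R | ∃ t, p t ∧ v = Pi.single t 1} = Submodule.pi {i | ¬ p i} fun _ => ⊥ := by
  refine le_antisymm (span_le.2 ?_) fun v hv => ?_
  · rintro _ ⟨t, ht, rfl⟩ i hi
    exact Pi.single_eq_of_ne (by rintro rfl; exact hi ht) 1
  · rw [← Finset.univ_sum_single v]
    refine sum_mem fun i _ => ?_
    by_cases hi : p i
    · have hsingle : Pi.single i (1 : R) ∈ span R {v : ι → R | ∃ t, p t ∧ v = Pi.single t 1} :=
        subset_span ⟨i, hi, rfl⟩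
      simpa [← Pi.single_smul'] using smul_mem _ (v i) hsingle
    · simp [(mem_bot R).1 (hv i hi)]

-- The paper's `span ⟨e_c, …, e_k⟩`.
noncomputable def lowVanishing (k c : ℕ) : Submodule ℂ (Fin (k + 1) → ℂ) :=
  Submodule.pi {m | (m : ℕ) < c} fun _ => ⊥

theorem mem_lowVanishing {k c : ℕ} {v : Fin (k + 1) → ℂ} :
    v ∈ lowVanishing k c ↔ ∀ m : Fin (k + 1), (m : ℕ) < c → v m = 0 := by
  simp [lowVanishing, mem_pi]

theorem span_single_one_eq_lowVanishing (k c : ℕ) :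
    span ℂ {v : Fin (k + 1) → ℂ | ∃ t : Fin (k + 1), c ≤ (t : ℕ) ∧ v = Pi.single t 1} =
      lowVanishing k c := by
  rw [span_single_one_eq_pi]
  simp only [not_le]
  rfl

theorem lowVanishing_antitone (k : ℕ) : Antitone (lowVanishing k) :=
  fun _ _ hcd _ hv => mem_lowVanishing.2 fun m hm => mem_lowVanishing.1 hv m (hm.trans_le hcd)

theorem raiseOp_lowVanishing_le (k c : ℕ) :
    lowVanishing k c ≤ (lowVanishing k c).comap (raiseOp k) := by
  intro v hv
  refine mem_lowVanishing.2 fun m hm => ?_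
  simp only [raiseOp, LinearMap.coe_mk, AddHom.coe_mk]
  split_ifs
  · rw [mem_lowVanishing.1 hv _ (by simp; omega), mul_zero]
  · rfl

theorem cartanOp_lowVanishing_le (k c : ℕ) :
    lowVanishing k c ≤ (lowVanishing k c).comap (cartanOp k) := by
  intro v hv
  refine mem_lowVanishing.2 fun m hm => ?_
  simp only [cartanOp, LinearMap.coe_mk, AddHom.coe_mk, mem_lowVanishing.1 hv m hm, mul_zero]

theorem lowerOp_lowVanishing_succ_le (k c : ℕ) :
    lowVanishing k (c + 1) ≤ (lowVanishing k c).comap (lowerOp k) := by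
  intro v hv
  refine mem_lowVanishing.2 fun m hm => ?_
  simp only [lowerOp, LinearMap.coe_mk, AddHom.coe_mk]
  split_ifs
  · rw [mem_lowVanishing.1 hv _ (by simp; omega), mul_zero]
  · rfl

theorem mem_compatibleMaps_lowVanishing_of_mem_span {k c : ℕ} {A : Module.End ℂ (Fin (k + 1) → ℂ)}
    (hA : A ∈ span ℂ {raiseOp k, cartanOp k, lowerOp k}) :
    A ∈ compatibleMaps (lowVanishing k (c + 1)) (lowVanishing k c) := by
  have hsucc := lowVanishing_antitone k c.le_succ
  refine span_le.2 ?_ hA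
  rintro _ (rfl | rfl | rfl)
  · exact hsucc.trans (raiseOp_lowVanishing_le k c)
  · exact hsucc.trans (cartanOp_lowVanishing_le k c)
  · exact lowerOp_lowVanishing_succ_le k c

theorem single_zero_notMem_lowVanishing {k c : ℕ} (hc : 0 < c) :
    (Pi.single 0 (1 : ℂ) : Fin (k + 1) → ℂ) ∉ lowVanishing k c :=
  fun h => by simpa using mem_lowVanishing.1 h 0 hc

theorem stmt_16_general (k j : ℕ) (hj : 1 < j)
    (U : Submodule ℂ (Fin (k + 1) → ℂ))
    (hU : U = Submodule.span ℂ
      {v : Fin (k + 1) → ℂ | ∃ t : Fin (k + 1), j ≤ (t : ℕ) ∧ v = Pi.single t 1}) :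
    ∀ (m : ℕ) (T : Fin m → Module.End ℂ (Fin (k + 1) → ℂ)),
      (∀ i, T i ∈ Submodule.span ℂ {raiseOp k, cartanOp k, lowerOp k}) →
        (U ⊔ ⨆ i, Submodule.map (T i) U) ≤
          Submodule.span ℂ
            {v : Fin (k + 1) → ℂ | ∃ t : Fin (k + 1), j - 1 ≤ (t : ℕ) ∧ v = Pi.single t 1} ∧
        (U ⊔ ⨆ i, Submodule.map (T i) U) ≠ ⊤ := by
  intro m T hT
  obtain ⟨c, rfl⟩ : ∃ c, j = c + 1 := ⟨j - 1, by omega⟩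
  rw [span_single_one_eq_lowVanishing, Nat.add_sub_cancel]
  rw [span_single_one_eq_lowVanishing] at hU
  subst hU
  have hle : (lowVanishing k (c + 1) ⊔ ⨆ i, (lowVanishing k (c + 1)).map (T i)) ≤
      lowVanishing k c :=
    sup_le (lowVanishing_antitone k c.le_succ)
      (iSup_le fun i => map_le_iff_le_comap.2 (mem_compatibleMaps_lowVanishing_of_mem_span (hT i)))
  exact ⟨hle, fun htop =>
    single_zero_notMem_lowVanishing (k := k) (c := c) (by omega) (hle (htop ▸ mem_top))⟩

theorem stmt_16 (k j : ℕ) (hk : 2 ≤ k) (hj : 1 < j) (hjk : j ≤ k)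
    (U : Submodule ℂ (Fin (k + 1) → ℂ))
    (hU : U = Submodule.span ℂ
      {v : Fin (k + 1) → ℂ | ∃ t : Fin (k + 1), j ≤ (t : ℕ) ∧ v = Pi.single t 1}) :
    ∀ (m : ℕ) (T : Fin m → Module.End ℂ (Fin (k + 1) → ℂ)),
      (∀ i, T i ∈ Submodule.span ℂ {raiseOp k, cartanOp k, lowerOp k}) →
        (U ⊔ ⨆ i, Submodule.map (T i) U) ≤
          Submodule.span ℂ
            {v : Fin (k + 1) → ℂ | ∃ t : Fin (k + 1), j - 1 ≤ (t : ℕ) ∧ v = Pi.single t 1} ∧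
        (U ⊔ ⨆ i, Submodule.map (T i) U) ≠ ⊤ :=
  stmt_16_general k j hj U hU
end
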